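/- arXiv:1409.5752 — 7 statements merged into one kernel-verified Lean document; each statement's English description precedes it below -/
import Mathlib

section
/- (Proposition 1, first opening angle.) Let z̄ ∈ ℝ², λ1, λ2, w1, w2 > 0, α ≥ 0, ε ≥ 0 with α + ε > 0, and set θ1 = arctan(−ε·w1 / (α·λ2 + ε·w2)). Then for all z, z' ∈ R2, one has S_gen(z) = S_gen(z') if and only if (z'1 − z1)·sin θ1 = (z'2 − z2)·cos θ1; that is, within R2 the lines of equal S_gen-values make polar angle θ1 with the f1-axis. -/
/-!
On `R2` the maximum in `S_gen` is attained by its second term, so there `S_gen` is affine with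
gradient `-(ε w1, α λ2 + ε w2)`. Its level lines are therefore parallel to
`(α λ2 + ε w2, -ε w1)`, a vector with positive first coordinate whose polar angle is `θ1`.
-/

open Real

/-- The generalized scalarizing function `S_gen`. -/
noncomputable def Sgen (zb : ℝ × ℝ) (lam1 lam2 w1 w2 α ε : ℝ) (z : ℝ × ℝ) : ℝ :=
  α * max (lam1 * |zb.1 - z.1|) (lam2 * |zb.2 - z.2|) +
    ε * (w1 * |zb.1 - z.1| + w2 * |zb.2 - z.2|)

theorem Sgen_eq_of_mem_R2 {zb z : ℝ × ℝ} {lam1 lam2 w1 w2 α ε : ℝ}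
    (h1 : z.1 ≤ zb.1) (h2 : z.2 ≤ zb.2) (h12 : lam1 * (zb.1 - z.1) ≤ lam2 * (zb.2 - z.2)) :
    Sgen zb lam1 lam2 w1 w2 α ε z =
      ε * w1 * (zb.1 - z.1) + (α * lam2 + ε * w2) * (zb.2 - z.2) := by
  rw [Sgen, abs_of_nonneg (sub_nonneg.2 h1), abs_of_nonneg (sub_nonneg.2 h2), max_eq_right h12]
  ring

theorem mul_sin_arctan_eq_mul_cos_arctan_iff (t x y : ℝ) :
    x * sin (arctan t) = y * cos (arctan t) ↔ y = t * x := by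
  have hs : 0 < √(1 + t ^ 2) := by positivity
  rw [sin_arctan, cos_arctan, ← mul_div_assoc, mul_one_div, div_left_inj' hs.ne', eq_comm,
    mul_comm]

theorem sgen_equi_lines_R2_general (zb : ℝ × ℝ) (lam1 lam2 w1 w2 α ε : ℝ)
    (hl2 : 0 < lam2) (hw2 : 0 < w2)
    (hα : 0 ≤ α) (hε : 0 ≤ ε) (hαε : 0 < α + ε)
    (θ1 : ℝ) (hθ1 : θ1 = Real.arctan (-(ε * w1) / (α * lam2 + ε * w2))) :
    ∀ z z' : ℝ × ℝ,
      z.1 ≤ zb.1 → z.2 ≤ zb.2 → lam1 * (zb.1 - z.1) ≤ lam2 * (zb.2 - z.2) →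
      z'.1 ≤ zb.1 → z'.2 ≤ zb.2 → lam1 * (zb.1 - z'.1) ≤ lam2 * (zb.2 - z'.2) →
      (Sgen zb lam1 lam2 w1 w2 α ε z = Sgen zb lam1 lam2 w1 w2 α ε z' ↔
        (z'.1 - z.1) * Real.sin θ1 = (z'.2 - z.2) * Real.cos θ1) := by
  intro z z' h1 h2 h12 h1' h2' h12'
  have hC : 0 < α * lam2 + ε * w2 := by
    rcases hα.eq_or_lt with rfl | hα
    · have : 0 < ε := by linarith
      positivity
    · positivity
  rw [Sgen_eq_of_mem_R2 h1 h2 h12, Sgen_eq_of_mem_R2 h1' h2' h12', hθ1,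
    mul_sin_arctan_eq_mul_cos_arctan_iff, div_mul_eq_mul_div, eq_div_iff hC.ne']
  constructor <;> intro h <;> linear_combination h

/-- Proposition 1, first opening angle: within the region `R2`, two points have equal
`S_gen`-value iff their displacement lies along polar angle
`θ1 = arctan (−ε·w1 / (α·λ2 + ε·w2))`. -/
theorem sgen_equi_lines_R2 (zb : ℝ × ℝ) (lam1 lam2 w1 w2 α ε : ℝ)
    (hl1 : 0 < lam1) (hl2 : 0 < lam2) (hw1 : 0 < w1) (hw2 : 0 < w2)
    (hα : 0 ≤ α) (hε : 0 ≤ ε) (hαε : 0 < α + ε)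
    (θ1 : ℝ) (hθ1 : θ1 = Real.arctan (-(ε * w1) / (α * lam2 + ε * w2))) :
    ∀ z z' : ℝ × ℝ,
      z.1 ≤ zb.1 → z.2 ≤ zb.2 → lam1 * (zb.1 - z.1) ≤ lam2 * (zb.2 - z.2) →
      z'.1 ≤ zb.1 → z'.2 ≤ zb.2 → lam1 * (zb.1 - z'.1) ≤ lam2 * (zb.2 - z'.2) →
      (Sgen zb lam1 lam2 w1 w2 α ε z = Sgen zb lam1 lam2 w1 w2 α ε z' ↔
        (z'.1 - z.1) * Real.sin θ1 = (z'.2 - z.2) * Real.cos θ1) :=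
  sgen_equi_lines_R2_general zb lam1 lam2 w1 w2 α ε hl2 hw2 hα hε hαε θ1 hθ1
end

section
/- (Proposition 1, second opening angle.) Let z̄ ∈ ℝ², λ1, λ2, w1, w2 > 0, α ≥ 0, ε ≥ 0 with α + ε > 0, and set θ2 = π/2 + arctan(ε·w2 / (α·λ1 + ε·w1)). Then for all z, z' ∈ R1, one has S_gen(z) = S_gen(z') if and only if (z'1 − z1)·sin θ2 = (z'2 − z2)·cos θ2; that is, within R1 the lines of equal S_gen-values make polar angle θ2 with the f1-axis. -/
open Real

/-- Proposition 1, second opening angle: within the region `R1`, two points have equal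
`S_gen`-value iff their displacement lies along polar angle
`θ2 = π/2 + arctan (ε·w2 / (α·λ1 + ε·w1))`. -/
theorem sgen_equi_lines_R1 (zb : ℝ × ℝ) (lam1 lam2 w1 w2 α ε : ℝ)
    (hl1 : 0 < lam1) (hl2 : 0 < lam2) (hw1 : 0 < w1) (hw2 : 0 < w2)
    (hα : 0 ≤ α) (hε : 0 ≤ ε) (hαε : 0 < α + ε)
    (θ2 : ℝ) (hθ2 : θ2 = Real.pi / 2 + Real.arctan (ε * w2 / (α * lam1 + ε * w1))) :
    ∀ z z' : ℝ × ℝ,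
      z.1 ≤ zb.1 → z.2 ≤ zb.2 → lam2 * (zb.2 - z.2) ≤ lam1 * (zb.1 - z.1) →
      z'.1 ≤ zb.1 → z'.2 ≤ zb.2 → lam2 * (zb.2 - z'.2) ≤ lam1 * (zb.1 - z'.1) →
      (Sgen zb lam1 lam2 w1 w2 α ε z = Sgen zb lam1 lam2 w1 w2 α ε z' ↔
        (z'.1 - z.1) * Real.sin θ2 = (z'.2 - z.2) * Real.cos θ2) := by
  intro z z' hz1 hz2 hzR hz'1 hz'2 hz'R
  set A := α * lam1 + ε * w1 with hAdef
  set B := ε * w2 with hBdef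
  have hApos : 0 < A := by
    rcases hα.lt_or_eq with h | h
    · nlinarith [mul_pos h hl1, mul_nonneg hε hw1.le]
    · have hεpos : 0 < ε := by linarith
      nlinarith [mul_pos hεpos hw1]
  have e1 : Sgen zb lam1 lam2 w1 w2 α ε z = A * (zb.1 - z.1) + B * (zb.2 - z.2) := by
    simp only [Sgen, abs_of_nonneg (sub_nonneg.mpr hz1), abs_of_nonneg (sub_nonneg.mpr hz2)]
    rw [show lam1 * (zb.1 - z.1) ⊔ lam2 * (zb.2 - z.2) = lam1 * (zb.1 - z.1) from
      max_eq_left hzR]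
    ring
  have e2 : Sgen zb lam1 lam2 w1 w2 α ε z' = A * (zb.1 - z'.1) + B * (zb.2 - z'.2) := by
    simp only [Sgen, abs_of_nonneg (sub_nonneg.mpr hz'1), abs_of_nonneg (sub_nonneg.mpr hz'2)]
    rw [show lam1 * (zb.1 - z'.1) ⊔ lam2 * (zb.2 - z'.2) = lam1 * (zb.1 - z'.1) from
      max_eq_left hz'R]
    ring
  have hsq : (0:ℝ) < Real.sqrt (1 + (B / A) ^ 2) := Real.sqrt_pos.mpr (by positivity)
  have hs : Real.sin θ2 = 1 / Real.sqrt (1 + (B / A) ^ 2) := by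
    rw [hθ2, Real.sin_add]
    simp [Real.cos_arctan]
  have hc : Real.cos θ2 = -(B / A / Real.sqrt (1 + (B / A) ^ 2)) := by
    rw [hθ2, Real.cos_add]
    simp [Real.sin_arctan]
  rw [e1, e2, hs, hc]
  constructor
  · intro h
    have key : A * (z'.1 - z.1) + B * (z'.2 - z.2) = 0 := by linear_combination h
    field_simp
    linear_combination key
  · intro h
    have h' : (z'.1 - z.1) * A = -((z'.2 - z.2) * B) := by
      field_simp at h
      linarith [h]
    linear_combination h'
end

section
/- (Level-set characterization.) Let z̄ ∈ ℝ², λ1, λ2, w1, w2 > 0, α ≥ 0, ε ≥ 0 with α + ε > 0, and let c > 0. Set K = α + ε·(w1/λ1 + w2/λ2) > 0, t = c/K, and z* = (z̄1 − t/λ1, z̄2 − t/λ2) (the kink point, lying on the boundary between R1 and R2 with S_gen(z*) = c). Then every z ∈ D with S_gen(z) = c satisfies (z1 − z*1)·sin θ1 = (z2 − z*2)·cos θ1 or (z1 − z*1)·sin θ2 = (z2 − z*2)·cos θ2, where θ1 = arctan(−ε·w1/(α·λ2 + ε·w2)) and θ2 = π/2 + arctan(ε·w2/(α·λ1 + ε·w1));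 i.e., the level set {z ∈ D : S_gen(z) = c} is contained in the union of the two lines through z* with polar angles θ1 and θ2. -/
open Real

/-- Level-set characterization: the level set `{z ∈ D : S_gen(z) = c}` is contained in the
union of the two lines through the kink point `z*` of polar angles `θ1` and `θ2`. -/
theorem sgen_level_set_subset_two_lines (zb : ℝ × ℝ) (lam1 lam2 w1 w2 α ε c : ℝ)
    (hl1 : 0 < lam1) (hl2 : 0 < lam2) (hw1 : 0 < w1) (hw2 : 0 < w2)
    (hα : 0 ≤ α) (hε : 0 ≤ ε) (hαε : 0 < α + ε) (hc : 0 < c)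
    (K t : ℝ) (hK : K = α + ε * (w1 / lam1 + w2 / lam2)) (ht : t = c / K)
    (zstar : ℝ × ℝ) (hzstar : zstar = (zb.1 - t / lam1, zb.2 - t / lam2))
    (θ1 θ2 : ℝ)
    (hθ1 : θ1 = Real.arctan (-(ε * w1) / (α * lam2 + ε * w2)))
    (hθ2 : θ2 = Real.pi / 2 + Real.arctan (ε * w2 / (α * lam1 + ε * w1))) :
    ∀ z : ℝ × ℝ, z.1 ≤ zb.1 → z.2 ≤ zb.2 →
      Sgen zb lam1 lam2 w1 w2 α ε z = c →
      (z.1 - zstar.1) * Real.sin θ1 = (z.2 - zstar.2) * Real.cos θ1 ∨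
      (z.1 - zstar.1) * Real.sin θ2 = (z.2 - zstar.2) * Real.cos θ2 := by
  intro z hz1 hz2 hS
  have hposaux : ∀ x y : ℝ, 0 < x → 0 < y → 0 < α * x + ε * y := by
    intro x y hx hy
    rcases hα.lt_or_eq with h | h
    · nlinarith
    · nlinarith [mul_pos (show 0 < ε by linarith) hy]
  have ha : 0 ≤ zb.1 - z.1 := by linarith
  have hb : 0 ≤ zb.2 - z.2 := by linarith
  have hK0 : 0 < K := by
    rw [hK]
    have := hposaux 1 (w1 / lam1 + w2 / lam2) one_pos (by positivity)
    linarith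
  have htK : c = t * K := by rw [ht]; field_simp
  simp only [Sgen, abs_of_nonneg ha, abs_of_nonneg hb] at hS
  have hd1 : 0 < α * lam1 + ε * w1 := hposaux lam1 w1 hl1 hw1
  have hd2 : 0 < α * lam2 + ε * w2 := hposaux lam2 w2 hl2 hw2
  rcases le_total (lam1 * (zb.1 - z.1)) (lam2 * (zb.2 - z.2)) with hmax | hmax
  · -- max is lam2 * b, line θ1
    left
    rw [max_eq_right hmax] at hS
    have key : (z.1 - zstar.1) * (ε * w1) + (z.2 - zstar.2) * (α * lam2 + ε * w2) = 0 := by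
      rw [hzstar, hK] at *
      field_simp at htK ⊢
      linear_combination (-1) * htK - lam1 * lam2 * hS
    have hpq : (z.1 - zstar.1) * (-(ε * w1) / (α * lam2 + ε * w2)) = z.2 - zstar.2 := by
      rw [← mul_div_assoc, div_eq_iff hd2.ne']
      linear_combination -key
    rw [hθ1, Real.sin_arctan, Real.cos_arctan, ← mul_div_assoc, hpq, mul_one_div]
  · -- max is lam1 * a, line θ2
    right
    rw [max_eq_left hmax] at hS
    have key : (z.1 - zstar.1) * (α * lam1 + ε * w1) + (z.2 - zstar.2) * (ε * w2) = 0 := by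
      rw [hzstar, hK] at *
      field_simp at htK ⊢
      linear_combination (-1) * htK - lam1 * lam2 * hS
    have hpq : (z.2 - zstar.2) * (ε * w2 / (α * lam1 + ε * w1)) = -(z.1 - zstar.1) := by
      rw [← mul_div_assoc, div_eq_iff hd1.ne']
      linear_combination key
    have hsin : Real.sin θ2 = Real.cos (Real.arctan (ε * w2 / (α * lam1 + ε * w1))) := by
      rw [hθ2, Real.sin_add]; simp
    have hcos : Real.cos θ2 = -Real.sin (Real.arctan (ε * w2 / (α * lam1 + ε * w1))) := by
      rw [hθ2, Real.cos_add]; simp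
    rw [hsin, hcos, Real.sin_arctan, Real.cos_arctan, mul_one_div, mul_neg,
      ← mul_div_assoc, hpq]
    ring
end

section
/- (Augmented Chebychev special case of Proposition 1.) Let z̄ ∈ ℝ², λ1, λ2 > 0, ε ≥ 0, and let S_aug(z) = max(λ1·|z̄1 − z1|, λ2·|z̄2 − z2|) + ε·(|z̄1 − z1| + |z̄2 − z2|) (i.e., S_gen with α = 1, w1 = w2 = 1). Then for all z, z' ∈ R2, S_aug(z) = S_aug(z') if and only if (z'1 − z1)·sin θ1 = (z'2 − z2)·cos θ1 with θ1 = arctan(−ε/(λ2 + ε)), and for all z, z' ∈ R1, S_aug(z) = S_aug(z') if and only if (z'1 − z1)·sin θ2 = (z'2 − z2)·cos θ2 with θ2 = π/2 + arctan(ε/(λ1 + ε)). -/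
open Real

/-- The augmented weighted Chebychev scalarizing function `S_aug`. -/
noncomputable def Saug (zb : ℝ × ℝ) (lam1 lam2 ε : ℝ) (z : ℝ × ℝ) : ℝ :=
  max (lam1 * |zb.1 - z.1|) (lam2 * |zb.2 - z.2|) + ε * (|zb.1 - z.1| + |zb.2 - z.2|)

/-- Augmented Chebychev special case of Proposition 1: within `R2` (resp. `R1`) equal
`S_aug`-values correspond to displacements of polar angle `θ1 = arctan (−ε/(λ2 + ε))`
(resp. `θ2 = π/2 + arctan (ε/(λ1 + ε))`). -/
theorem aug_chebychev_equi_lines (zb : ℝ × ℝ) (lam1 lam2 ε : ℝ)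
    (hl1 : 0 < lam1) (hl2 : 0 < lam2) (hε : 0 ≤ ε)
    (θ1 θ2 : ℝ)
    (hθ1 : θ1 = Real.arctan (-ε / (lam2 + ε)))
    (hθ2 : θ2 = Real.pi / 2 + Real.arctan (ε / (lam1 + ε))) :
    (∀ z z' : ℝ × ℝ,
      z.1 ≤ zb.1 → z.2 ≤ zb.2 → lam1 * (zb.1 - z.1) ≤ lam2 * (zb.2 - z.2) →
      z'.1 ≤ zb.1 → z'.2 ≤ zb.2 → lam1 * (zb.1 - z'.1) ≤ lam2 * (zb.2 - z'.2) →
      (Saug zb lam1 lam2 ε z = Saug zb lam1 lam2 ε z' ↔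
        (z'.1 - z.1) * Real.sin θ1 = (z'.2 - z.2) * Real.cos θ1)) ∧
    (∀ z z' : ℝ × ℝ,
      z.1 ≤ zb.1 → z.2 ≤ zb.2 → lam2 * (zb.2 - z.2) ≤ lam1 * (zb.1 - z.1) →
      z'.1 ≤ zb.1 → z'.2 ≤ zb.2 → lam2 * (zb.2 - z'.2) ≤ lam1 * (zb.1 - z'.1) →
      (Saug zb lam1 lam2 ε z = Saug zb lam1 lam2 ε z' ↔
        (z'.1 - z.1) * Real.sin θ2 = (z'.2 - z.2) * Real.cos θ2)) := by
  have h2 : (0:ℝ) < lam2 + ε := by linarith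
  have h1 : (0:ℝ) < lam1 + ε := by linarith
  -- trig equivalence for θ1
  have key1 : ∀ A B : ℝ, (A * Real.sin θ1 = B * Real.cos θ1) ↔
      ε * A + (lam2 + ε) * B = 0 := by
    intro A B
    rw [hθ1, Real.sin_arctan, Real.cos_arctan]
    set x : ℝ := -ε / (lam2 + ε) with hx
    have hxval : x * (lam2 + ε) = -ε := by
      rw [hx]; field_simp
    have hSpos : (0:ℝ) < Real.sqrt (1 + x ^ 2) := Real.sqrt_pos.2 (by positivity)
    rw [mul_div_assoc', mul_one_div, div_eq_div_iff hSpos.ne' hSpos.ne',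
      mul_left_inj' hSpos.ne']
    constructor
    · intro h
      linear_combination (-(lam2 + ε)) * h + A * hxval
    · intro h
      have h3 : (lam2 + ε) * (A * x) = (lam2 + ε) * B := by
        linear_combination -h + A * hxval
      exact mul_left_cancel₀ h2.ne' h3
  -- trig equivalence for θ2
  have key2 : ∀ A B : ℝ, (A * Real.sin θ2 = B * Real.cos θ2) ↔
      (lam1 + ε) * A + ε * B = 0 := by
    intro A B
    rw [hθ2, Real.sin_add, Real.cos_add, Real.sin_pi_div_two, Real.cos_pi_div_two]
    rw [Real.sin_arctan, Real.cos_arctan]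
    set x : ℝ := ε / (lam1 + ε) with hx
    have hxval : x * (lam1 + ε) = ε := by
      rw [hx]; field_simp
    have hSpos : (0:ℝ) < Real.sqrt (1 + x ^ 2) := Real.sqrt_pos.2 (by positivity)
    have hrw : (A * (1 * (1 / Real.sqrt (1 + x ^ 2)) + 0 * (x / Real.sqrt (1 + x ^ 2)))
        = B * (0 * (1 / Real.sqrt (1 + x ^ 2)) - 1 * (x / Real.sqrt (1 + x ^ 2))))
        ↔ A / Real.sqrt (1 + x ^ 2) = (-(B * x)) / Real.sqrt (1 + x ^ 2) := by
      constructor <;> intro h <;> [skip; skip] <;> field_simp at h ⊢ <;> linarith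
    rw [hrw, div_eq_div_iff hSpos.ne' hSpos.ne', mul_left_inj' hSpos.ne']
    constructor
    · intro h
      linear_combination (lam1 + ε) * h - B * hxval
    · intro h
      have h3 : (lam1 + ε) * A = (lam1 + ε) * (-(B * x)) := by
        linear_combination h + B * hxval
      exact mul_left_cancel₀ h1.ne' h3
  constructor
  · intro z z' hz1 hz2 hzr h'1 h'2 h'r
    have e1 : Saug zb lam1 lam2 ε z
        = lam2 * (zb.2 - z.2) + ε * ((zb.1 - z.1) + (zb.2 - z.2)) := by
      unfold Saug
      rw [abs_of_nonneg (by linarith), abs_of_nonneg (by linarith), max_eq_right hzr]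
    have e2 : Saug zb lam1 lam2 ε z'
        = lam2 * (zb.2 - z'.2) + ε * ((zb.1 - z'.1) + (zb.2 - z'.2)) := by
      unfold Saug
      rw [abs_of_nonneg (by linarith), abs_of_nonneg (by linarith), max_eq_right h'r]
    rw [e1, e2, key1]
    constructor
    · intro h; linear_combination h
    · intro h; linear_combination h
  · intro z z' hz1 hz2 hzr h'1 h'2 h'r
    have e1 : Saug zb lam1 lam2 ε z
        = lam1 * (zb.1 - z.1) + ε * ((zb.1 - z.1) + (zb.2 - z.2)) := by
      unfold Saug
      rw [abs_of_nonneg (by linarith), abs_of_nonneg (by linarith), max_eq_left hzr]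
    have e2 : Saug zb lam1 lam2 ε z'
        = lam1 * (zb.1 - z'.1) + ε * ((zb.1 - z'.1) + (zb.2 - z'.2)) := by
      unfold Saug
      rw [abs_of_nonneg (by linarith), abs_of_nonneg (by linarith), max_eq_left h'r]
    rw [e1, e2, key2]
    constructor
    · intro h; linear_combination h
    · intro h; linear_combination h
end

section
/- (Opening width of the equi-utility cone.) Let λ1, λ2, w1, w2 > 0, α ≥ 0, ε ≥ 0 with α + ε > 0, and set θ1 = arctan(−ε·w1/(α·λ2 + ε·w2)) and θ2 = π/2 + arctan(ε·w2/(α·λ1 + ε·w1)). Then π/2 ≤ θ2 − θ1 ≤ π; moreover θ2 − θ1 = π/2 if and only if ε = 0, and θ2 − θ1 = π if and only if α = 0 (and in all remaining cases, i.e., α > 0 and ε > 0, one has π/2 < θ2 − θ1 < π). -/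
open Real

/-!
Writing `u = ε w₂ / (α λ₁ + ε w₁)` and `v = ε w₁ / (α λ₂ + ε w₂)`, we have
`θ₂ - θ₁ = π/2 + arctan u + arctan v` with `u, v ≥ 0`. The sum `arctan u + arctan v` vanishes
exactly when `u = v = 0`, i.e. when `ε = 0`, and compares with `π/2` as `u v` compares with `1`.
Finally `(α λ₁ + ε w₁)(α λ₂ + ε w₂) = ε² w₁ w₂ + α (α λ₁ λ₂ + ε (λ₁ w₂ + λ₂ w₁))`, so `u v ≤ 1`,
with equality exactly when `α = 0`.
-/

namespace Real

variable {x y : ℝ}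

theorem arctan_add_arctan_le_pi_div_two_iff (hx : 0 ≤ x) :
    arctan x + arctan y ≤ π / 2 ↔ x * y ≤ 1 := by
  rcases hx.eq_or_lt with rfl | hx
  · simpa using (arctan_lt_pi_div_two y).le
  · rw [← le_sub_iff_add_le', ← arctan_inv_of_pos hx, arctan_le_arctan_iff, inv_eq_one_div,
      le_div_iff₀' hx]

theorem arctan_add_arctan_eq_pi_div_two_iff (hx : 0 ≤ x) :
    arctan x + arctan y = π / 2 ↔ x * y = 1 := by
  rcases hx.eq_or_lt with rfl | hx
  · simpa using (arctan_lt_pi_div_two y).ne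
  · rw [← eq_sub_iff_add_eq', ← arctan_inv_of_pos hx, arctan_inj, inv_eq_one_div,
      eq_div_iff hx.ne', mul_comm]

theorem arctan_add_arctan_eq_zero_iff (hx : 0 ≤ x) (hy : 0 ≤ y) :
    arctan x + arctan y = 0 ↔ x = 0 ∧ y = 0 := by
  rw [add_eq_zero_iff_of_nonneg (arctan_nonneg.2 hx) (arctan_nonneg.2 hy), arctan_eq_zero_iff,
    arctan_eq_zero_iff]

end Real

section SgenSlopes

variable {lam1 lam2 w1 w2 α ε : ℝ}

theorem sgen_denom_pos (hl : 0 < lam1) (hw : 0 < w1) (hα : 0 ≤ α) (hε : 0 ≤ ε)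
    (hαε : 0 < α + ε) : 0 < α * lam1 + ε * w1 := by
  rcases hα.eq_or_lt with rfl | hα
  · simp only [zero_add] at hαε
    positivity
  · positivity

theorem sgen_denom_mul_denom :
    (α * lam1 + ε * w1) * (α * lam2 + ε * w2) =
      ε * w2 * (ε * w1) + α * (α * lam1 * lam2 + ε * (lam1 * w2 + lam2 * w1)) := by
  ring

theorem sgen_slope_mul_slope_le_one (hl1 : 0 < lam1) (hl2 : 0 < lam2) (hw1 : 0 ≤ w1)
    (hw2 : 0 ≤ w2) (hα : 0 ≤ α) (hε : 0 ≤ ε) (hd1 : 0 < α * lam1 + ε * w1)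
    (hd2 : 0 < α * lam2 + ε * w2) :
    ε * w2 / (α * lam1 + ε * w1) * (ε * w1 / (α * lam2 + ε * w2)) ≤ 1 := by
  rw [div_mul_div_comm, div_le_one (mul_pos hd1 hd2), sgen_denom_mul_denom]
  exact le_add_of_nonneg_right (by positivity)

theorem sgen_slope_mul_slope_eq_one_iff (hl1 : 0 < lam1) (hl2 : 0 < lam2) (hw1 : 0 ≤ w1)
    (hw2 : 0 ≤ w2) (hα : 0 ≤ α) (hε : 0 ≤ ε) (hd1 : 0 < α * lam1 + ε * w1)
    (hd2 : 0 < α * lam2 + ε * w2) :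
    ε * w2 / (α * lam1 + ε * w1) * (ε * w1 / (α * lam2 + ε * w2)) = 1 ↔ α = 0 := by
  rw [div_mul_div_comm, div_eq_one_iff_eq (mul_pos hd1 hd2).ne', sgen_denom_mul_denom,
    left_eq_add, mul_eq_zero, or_iff_left_iff_imp]
  intro h
  have hrest : 0 ≤ ε * (lam1 * w2 + lam2 * w1) := by positivity
  nlinarith [mul_pos hl1 hl2]

end SgenSlopes

/-- Opening width of the equi-utility cone of `S_gen`: `π/2 ≤ θ2 − θ1 ≤ π`, with
`θ2 − θ1 = π/2 ↔ ε = 0`, `θ2 − θ1 = π ↔ α = 0`, and strict inequalities when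
`α > 0` and `ε > 0`. -/
theorem sgen_cone_opening_width (lam1 lam2 w1 w2 α ε : ℝ)
    (hl1 : 0 < lam1) (hl2 : 0 < lam2) (hw1 : 0 < w1) (hw2 : 0 < w2)
    (hα : 0 ≤ α) (hε : 0 ≤ ε) (hαε : 0 < α + ε)
    (θ1 θ2 : ℝ)
    (hθ1 : θ1 = Real.arctan (-(ε * w1) / (α * lam2 + ε * w2)))
    (hθ2 : θ2 = Real.pi / 2 + Real.arctan (ε * w2 / (α * lam1 + ε * w1))) :
    (Real.pi / 2 ≤ θ2 - θ1 ∧ θ2 - θ1 ≤ Real.pi) ∧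
    (θ2 - θ1 = Real.pi / 2 ↔ ε = 0) ∧
    (θ2 - θ1 = Real.pi ↔ α = 0) ∧
    (0 < α → 0 < ε → Real.pi / 2 < θ2 - θ1 ∧ θ2 - θ1 < Real.pi) := by
  have hd1 := sgen_denom_pos hl1 hw1 hα hε hαε
  have hd2 := sgen_denom_pos hl2 hw2 hα hε hαε
  set u := ε * w2 / (α * lam1 + ε * w1)
  set v := ε * w1 / (α * lam2 + ε * w2)
  have hu : 0 ≤ u := by positivity
  have hv : 0 ≤ v := by positivity
  have hθ : θ2 - θ1 = π / 2 + (arctan u + arctan v) := by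
    rw [hθ1, hθ2, neg_div, arctan_neg]
    ring
  have hnonneg : 0 ≤ arctan u + arctan v := add_nonneg (arctan_nonneg.2 hu) (arctan_nonneg.2 hv)
  have hzero : arctan u + arctan v = 0 ↔ ε = 0 := by
    rw [arctan_add_arctan_eq_zero_iff hu hv]
    constructor
    · rintro ⟨hu0, -⟩
      simpa [u, hw2.ne', hd1.ne'] using hu0
    · rintro rfl
      simp [u, v]
  have hle : arctan u + arctan v ≤ π / 2 := (arctan_add_arctan_le_pi_div_two_iff hu).2
    (sgen_slope_mul_slope_le_one hl1 hl2 hw1.le hw2.le hα hε hd1 hd2)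
  have hhalf : arctan u + arctan v = π / 2 ↔ α = 0 := (arctan_add_arctan_eq_pi_div_two_iff hu).trans
    (sgen_slope_mul_slope_eq_one_iff hl1 hl2 hw1.le hw2.le hα hε hd1 hd2)
  rw [hθ]
  refine ⟨⟨by linarith, by linarith⟩, ?_, ?_, fun hα0 hε0 => ?_⟩
  · rw [← hzero]
    constructor <;> intro h <;> linarith
  · rw [← hhalf]
    constructor <;> intro h <;> linarith
  · have hpos := lt_of_le_of_ne hnonneg (Ne.symm (hzero.not.2 hε0.ne'))
    have hlt := lt_of_le_of_ne hle (hhalf.not.2 hα0.ne')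
    constructor <;> linarith
end

section
/- (Strict monotonicity of the first opening angle of S_norm.) Fix a direction angle δ ∈ (0, π/2). Then the function ε ↦ θ1(ε) = arctan(−ε·cos δ / ((1 − ε)/sin δ + ε·sin δ)) is strictly decreasing on [0, 1]; i.e., increasing the weight ε of the weighted-sum term moves the first opening angle strictly downward from 0 (Chebychev) to δ − π/2 (weighted sum). -/
open Real

/-!
Since `sin² δ + cos² δ = 1`, the argument of the arctangent in `θ₁` simplifies to
`-(sin δ cos δ) · ε / (1 - cos² δ · ε)`. The Möbius map `ε ↦ ε / (1 - k ε)` is strictly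
increasing wherever its denominator is positive, and here `cos² δ < 1`, so the argument
strictly decreases on `[0, 1]`; `arctan` is strictly increasing.
-/

/-- The first opening angle of `S_norm` as a function of `ε`, for direction angle `δ`. -/
noncomputable def theta1 (δ ε : ℝ) : ℝ :=
  Real.arctan (-(ε * Real.cos δ) / ((1 - ε) / Real.sin δ + ε * Real.sin δ))

theorem strictMonoOn_div_one_sub_mul (k : ℝ) :
    StrictMonoOn (fun x => x / (1 - k * x)) {x | k * x < 1} := by
  intro a ha b hb hab
  have ha' : 0 < 1 - k * a := sub_pos.mpr ha
  have hb' : 0 < 1 - k * b := sub_pos.mpr hb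
  rw [div_lt_div_iff₀ ha' hb']
  linarith

theorem theta1_eq_arctan_mul_div {δ : ℝ} (hs : sin δ ≠ 0) (ε : ℝ) :
    theta1 δ ε = arctan (-(sin δ * cos δ) * (ε / (1 - cos δ ^ 2 * ε))) := by
  have hden : (1 - ε) / sin δ + ε * sin δ = (1 - cos δ ^ 2 * ε) / sin δ := by
    field_simp
    linear_combination ε * sin_sq_add_cos_sq δ
  rw [theta1, hden, div_div_eq_mul_div]
  ring_nf

/-- Strict monotonicity of the first opening angle of `S_norm`: for a fixed direction angle
`δ ∈ (0, π/2)`, the map `ε ↦ θ1(ε)` is strictly decreasing on `[0, 1]`. -/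
theorem snorm_theta1_strictAnti (δ : ℝ) (hδ0 : 0 < δ) (hδ1 : δ < Real.pi / 2) :
    StrictAntiOn (theta1 δ) (Set.Icc (0 : ℝ) 1) := by
  have hs : 0 < sin δ := sin_pos_of_pos_of_lt_pi hδ0 (by linarith [pi_pos])
  have hc : 0 < cos δ := cos_pos_of_mem_Ioo ⟨by linarith [pi_pos], hδ1⟩
  have hc2 : cos δ ^ 2 < 1 := by nlinarith [sin_sq_add_cos_sq δ]
  have hIcc : Set.Icc (0 : ℝ) 1 ⊆ {x | cos δ ^ 2 * x < 1} := fun x ⟨hx0, hx1⟩ => by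
    show cos δ ^ 2 * x < 1
    nlinarith [sq_nonneg (cos δ)]
  intro a ha b hb hab
  rw [theta1_eq_arctan_mul_div hs.ne', theta1_eq_arctan_mul_div hs.ne']
  refine arctan_strictMono (mul_lt_mul_of_neg_left ?_ (neg_neg_of_pos (mul_pos hs hc)))
  exact strictMonoOn_div_one_sub_mul _ (hIcc ha) (hIcc hb) hab
end

section
/- (Range of the second opening angle of S_norm.) Fix a direction angle δ ∈ (0, π/2). For ε ∈ [0, 1], define θ2(ε) = π/2 + arctan(ε·sin δ / ((1 − ε)/cos δ + ε·cos δ)). Then θ2(0) = π/2, θ2(1) = π/2 + δ, and for all ε ∈ [0, 1], π/2 ≤ θ2(ε) ≤ π/2 + δ; moreover ε ↦ θ2(ε) is strictly increasing on [0, 1]. -/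
open Real

/-- The second opening angle of `S_norm` as a function of `ε`, for direction angle `δ`. -/
noncomputable def theta2 (δ ε : ℝ) : ℝ :=
  Real.pi / 2 + Real.arctan (ε * Real.sin δ / ((1 - ε) / Real.cos δ + ε * Real.cos δ))

/-!
Using `sin² δ + cos² δ = 1`, the argument of the arctangent in `θ₂(ε)` is the fractional linear
function `ε ↦ sin δ cos δ · ε / (1 - sin² δ · ε)`, which is strictly increasing wherever its
denominator is positive, in particular on `[0, 1]`, and takes the values `0` and `tan δ` at the
endpoints. Composing with the strictly increasing arctangent gives monotonicity, and the bounds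
are the endpoint values.
-/

theorem strictMonoOn_mul_div_one_sub_mul {a : ℝ} (ha : 0 < a) (k : ℝ) :
    StrictMonoOn (fun x => a * x / (1 - k * x)) {x | k * x < 1} := by
  intro x hx y hy hxy
  simp only [Set.mem_ofPred_eq] at hx hy
  rw [div_lt_div_iff₀ (by linarith) (by linarith)]
  nlinarith

theorem theta2_eq_arctan_div {δ : ℝ} (hc : cos δ ≠ 0) :
    theta2 δ = fun ε => π / 2 + arctan (sin δ * cos δ * ε / (1 - sin δ ^ 2 * ε)) := by
  funext ε
  have hden : (1 - ε) / cos δ + ε * cos δ = (1 - sin δ ^ 2 * ε) / cos δ := by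
    field_simp
    linear_combination ε * sin_sq_add_cos_sq δ
  rw [theta2, hden, div_div_eq_mul_div]
  ring_nf

theorem theta2_zero (δ : ℝ) : theta2 δ 0 = π / 2 := by
  simp [theta2]

theorem theta2_one {δ : ℝ} (hδ0 : -(π / 2) < δ) (hδ1 : δ < π / 2) :
    theta2 δ 1 = π / 2 + δ := by
  simp [theta2, ← tan_eq_sin_div_cos, arctan_tan hδ0 hδ1]

theorem theta2_strictMonoOn {δ : ℝ} (hδ0 : 0 < δ) (hδ1 : δ < π / 2) :
    StrictMonoOn (theta2 δ) (Set.Icc 0 1) := by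
  have hc : 0 < cos δ := cos_pos_of_mem_Ioo ⟨by linarith [pi_pos], hδ1⟩
  have hs : 0 < sin δ := sin_pos_of_pos_of_lt_pi hδ0 (by linarith [pi_pos])
  have hs_sq : sin δ ^ 2 < 1 := by nlinarith [sin_sq_add_cos_sq δ]
  have hIcc : Set.Icc (0 : ℝ) 1 ⊆ {ε | sin δ ^ 2 * ε < 1} := fun ε hε => by
    simp only [Set.mem_ofPred_eq]
    nlinarith [hε.1, hε.2]
  rw [theta2_eq_arctan_div hc.ne']
  exact ((arctan_strictMono.comp_strictMonoOn
    (strictMonoOn_mul_div_one_sub_mul (mul_pos hs hc) _)).mono hIcc).const_add _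

/-- Range of the second opening angle of `S_norm`: `θ2(0) = π/2`, `θ2(1) = π/2 + δ`,
`π/2 ≤ θ2(ε) ≤ π/2 + δ` for all `ε ∈ [0, 1]`, and `ε ↦ θ2(ε)` is strictly increasing
on `[0, 1]`. -/
theorem snorm_theta2_range (δ : ℝ) (hδ0 : 0 < δ) (hδ1 : δ < Real.pi / 2) :
    theta2 δ 0 = Real.pi / 2 ∧
    theta2 δ 1 = Real.pi / 2 + δ ∧
    (∀ ε ∈ Set.Icc (0 : ℝ) 1,
      Real.pi / 2 ≤ theta2 δ ε ∧ theta2 δ ε ≤ Real.pi / 2 + δ) ∧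
    StrictMonoOn (theta2 δ) (Set.Icc (0 : ℝ) 1) := by
  have h0 := theta2_zero δ
  have h1 := theta2_one (by linarith [pi_pos]) hδ1
  have hmono := theta2_strictMonoOn hδ0 hδ1
  refine ⟨h0, h1, fun ε hε => ?_, hmono⟩
  rw [← h1, ← h0]
  exact ⟨hmono.monotoneOn (Set.left_mem_Icc.2 zero_le_one) hε hε.1,
    hmono.monotoneOn hε (Set.right_mem_Icc.2 zero_le_one) hε.2⟩
end
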